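/- Let H be a finite-dimensional complex inner product space, let P̄_0,…,P̄_n be a CSOP on H, let U_0,…,U_t be unitary operators on H, let Ψ ∈ H with ‖Ψ‖ = 1, and let Q be an orthogonal projection on H. Define π : {0,1}^n → ℝ by π(x) = ‖ Q · Σ_{k ∈ {0,…,n}^{t+1}} (−1)^{s_x(k)} Ψ(k) ‖², where s_x(k) = Σ_{i=0}^t x_{k_i} and x_0 := 0, and let d = #{ k ∈ {0,…,n}^{t+1} : Ψ(k) ≠ 0 }. Then the Fourier 1-norm of π satisfies L(π) ≤ d. -/

import Mathlib

noncomputable section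

/-- `Utilde U j = U j ∘ U (j-1) ∘ ⋯ ∘ U 0`. -/
def Utilde {H : Type*} [NormedAddCommGroup H] [InnerProductSpace ℂ H]
    (U : ℕ → H →L[ℂ] H) : ℕ → H →L[ℂ] H
  | 0 => U 0
  | j + 1 => U (j + 1) ∘L Utilde U j

/-- `Ptilde U P i j = (Utilde U j)† ∘ P i ∘ Utilde U j`. -/
def Ptilde {H : Type*} [NormedAddCommGroup H] [InnerProductSpace ℂ H]
    [FiniteDimensional ℂ H] (U P : ℕ → H →L[ℂ] H) (i j : ℕ) : H →L[ℂ] H :=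
  ContinuousLinearMap.adjoint (Utilde U j) ∘L (P i ∘L Utilde U j)

/-- `PsiVec U P Ψ k t = Ψ(k) = P̃_{k t}^t ⋯ P̃_{k 1}^1 P̃_{k 0}^0 Ψ`. -/
def PsiVec {H : Type*} [NormedAddCommGroup H] [InnerProductSpace ℂ H]
    [FiniteDimensional ℂ H] (U P : ℕ → H →L[ℂ] H) (Ψ : H) (k : ℕ → ℕ) : ℕ → H
  | 0 => Ptilde U P (k 0) 0 Ψ
  | j + 1 => Ptilde U P (k (j + 1)) (j + 1) (PsiVec U P Ψ k j)

/-- Extension of `x ∈ {0,1}^n` (bits `x_1, …, x_n`) to indices `0, …, n` with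
the convention `x_0 := 0`. -/
def extend0 {n : ℕ} (x : Fin n → Bool) : ℕ → Bool :=
  fun m => if h : 1 ≤ m ∧ m ≤ n then x ⟨m - 1, by omega⟩ else false

/-- `sx x k = Σ_{i=0}^t x_{k_i}` (with `x_0 := 0`). -/
def sx {n t : ℕ} (x : Fin n → Bool) (k : Fin (t + 1) → Fin (n + 1)) : ℕ :=
  ∑ i, if extend0 x (k i) then 1 else 0


/-- The character `χ_b(x) = (−1)^{b·x}` on the Boolean cube, where
`b·x = Σ_i b_i x_i`. -/
def chi {n : ℕ} (b x : Fin n → Bool) : ℝ :=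
  (-1 : ℝ) ^ (∑ i, if b i && x i then 1 else 0 : ℕ)

/-- The Fourier coefficient `α_b = 2^{−n} Σ_x f(x) χ_b(x)` of `f : {0,1}^n → ℝ`. -/
def boolFourierCoeff {n : ℕ} (f : (Fin n → Bool) → ℝ) (b : Fin n → Bool) : ℝ :=
  (2 ^ n : ℝ)⁻¹ * ∑ x, f x * chi b x

/-- The Fourier 1-norm `L(f) = Σ_b |α_b|`. -/
def fourierL1 {n : ℕ} (f : (Fin n → Bool) → ℝ) : ℝ :=
  ∑ b, |boolFourierCoeff f b|

/-!
Expanding the square, `π(x) = Σ_{k,l} (−1)^{s_x(k) + s_x(l)} Re⟪QΨ(k), QΨ(l)⟫`. Each sign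
`(−1)^{s_x(k)}` is a character of the Boolean cube, and characters are closed under products and
have Fourier 1-norm one, so `L(π) ≤ Σ_{k,l} ‖QΨ(k)‖ ‖QΨ(l)‖ = (Σ_k ‖QΨ(k)‖)²`. By Cauchy–Schwarz
over the `d` paths with `Ψ(k) ≠ 0` this is at most `d Σ_k ‖Ψ(k)‖² = d ‖Ψ‖² = d`: each conjugated
CSOP `P̃^j` splits the squared norm of a vector into the squared norms of its pieces.
-/

open ContinuousLinearMap

section Projection

variable {𝕜 E : Type*} [RCLike 𝕜] [NormedAddCommGroup E] [InnerProductSpace 𝕜 E]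
  [CompleteSpace E]

theorem IsStarProjection.norm_apply_sq {p : E →L[𝕜] E} (hp : IsStarProjection p) (v : E) :
    ‖p v‖ ^ 2 = RCLike.re (inner 𝕜 v (p v)) := by
  rw [← inner_self_eq_norm_sq (𝕜 := 𝕜), ← adjoint_inner_right, hp.isSelfAdjoint.adjoint_eq,
    ← mul_apply_eq_comp, hp.isIdempotentElem.eq]

theorem IsStarProjection.norm_apply_le {p : E →L[𝕜] E} (hp : IsStarProjection p) (v : E) :
    ‖p v‖ ≤ ‖v‖ :=
  (p.le_opNorm v).trans (mul_le_of_le_one_left (norm_nonneg v) (hp.norm_le p))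

theorem sum_norm_apply_sq_of_sum_eq_one {ι : Type*} {s : Finset ι} {p : ι → E →L[𝕜] E}
    (hp : ∀ i ∈ s, IsStarProjection (p i)) (hsum : ∑ i ∈ s, p i = 1) (v : E) :
    ∑ i ∈ s, ‖p i v‖ ^ 2 = ‖v‖ ^ 2 := by
  rw [Finset.sum_congr rfl fun i hi => (hp i hi).norm_apply_sq v, ← map_sum, ← inner_sum,
    ← sum_apply, hsum, one_apply_eq_self, inner_self_eq_norm_sq (𝕜 := 𝕜)]

end Projection

section BooleanFourier

variable {n : ℕ}

theorem chi_eq_prod (b x : Fin n → Bool) :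
    chi b x = ∏ i, if b i && x i then -1 else 1 := by
  rw [chi, ← Finset.prod_pow_eq_pow_sum]
  exact Finset.prod_congr rfl fun i _ => by split_ifs <;> simp

theorem chi_mul (a b x : Fin n → Bool) :
    chi a x * chi b x = chi (fun i => xor (a i) (b i)) x := by
  simp only [chi_eq_prod, ← Finset.prod_mul_distrib]
  exact Finset.prod_congr rfl fun i _ => by cases a i <;> cases b i <;> cases x i <;> norm_num

theorem sum_chi_mul_chi (a b : Fin n → Bool) :
    ∑ x, chi a x * chi b x = if a = b then 2 ^ n else 0 := by
  have hcoord (i : Fin n) :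
      ∑ c : Bool, (if a i && c then (-1 : ℝ) else 1) * (if b i && c then -1 else 1) =
        if a i = b i then 2 else 0 := by
    cases a i <;> cases b i <;> norm_num
  simp only [chi_eq_prod, ← Finset.prod_mul_distrib]
  rw [← Fintype.prod_sum fun i c =>
      (if a i && c then (-1 : ℝ) else 1) * (if b i && c then -1 else 1),
    Fintype.prod_congr _ _ hcoord, Fintype.prod_ite_zero]
  simp [funext_iff]

theorem boolFourierCoeff_chi (a b : Fin n → Bool) :
    boolFourierCoeff (chi a) b = if a = b then 1 else 0 := by
  rw [boolFourierCoeff, sum_chi_mul_chi]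
  split_ifs <;> simp

theorem boolFourierCoeff_sum {ι : Type*} (s : Finset ι) (f : ι → (Fin n → Bool) → ℝ)
    (b : Fin n → Bool) :
    boolFourierCoeff (fun x => ∑ p ∈ s, f p x) b = ∑ p ∈ s, boolFourierCoeff (f p) b := by
  simp only [boolFourierCoeff, Finset.sum_mul, ← Finset.mul_sum]
  rw [Finset.sum_comm]

theorem boolFourierCoeff_mul_const (f : (Fin n → Bool) → ℝ) (c : ℝ) (b : Fin n → Bool) :
    boolFourierCoeff (fun x => f x * c) b = boolFourierCoeff f b * c := by
  simp only [boolFourierCoeff, mul_assoc, Finset.sum_mul]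
  exact congrArg _ (Finset.sum_congr rfl fun x _ => by ring)

theorem fourierL1_sum_le {ι : Type*} (s : Finset ι) (f : ι → (Fin n → Bool) → ℝ) :
    fourierL1 (fun x => ∑ p ∈ s, f p x) ≤ ∑ p ∈ s, fourierL1 (f p) := by
  simp only [fourierL1, boolFourierCoeff_sum]
  rw [Finset.sum_comm]
  exact Finset.sum_le_sum fun b _ => Finset.abs_sum_le_sum_abs _ _

theorem fourierL1_mul_const (f : (Fin n → Bool) → ℝ) (c : ℝ) :
    fourierL1 (fun x => f x * c) = fourierL1 f * |c| := by
  simp only [fourierL1, boolFourierCoeff_mul_const, abs_mul, Finset.sum_mul]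

theorem fourierL1_chi (a : Fin n → Bool) : fourierL1 (chi a) = 1 := by
  simp [fourierL1, boolFourierCoeff_chi, apply_ite]

variable (n) in
def boolCharacters : Submonoid ((Fin n → Bool) → ℝ) where
  carrier := Set.range chi
  mul_mem' := by
    rintro _ _ ⟨a, rfl⟩ ⟨b, rfl⟩
    exact ⟨fun i => xor (a i) (b i), funext fun x => (chi_mul a b x).symm⟩
  one_mem' := ⟨fun _ => false, funext fun x => by simp [chi]⟩

theorem fourierL1_of_mem_boolCharacters {f : (Fin n → Bool) → ℝ} (hf : f ∈ boolCharacters n) :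
    fourierL1 f = 1 := by
  obtain ⟨a, rfl⟩ := hf
  exact fourierL1_chi a

theorem neg_one_pow_extend0_mem_boolCharacters (m : ℕ) :
    (fun x => (-1 : ℝ) ^ (if extend0 x m then 1 else 0)) ∈ boolCharacters n := by
  by_cases hm : 1 ≤ m ∧ m ≤ n
  · set j : Fin n := ⟨m - 1, by omega⟩
    refine ⟨fun i => decide (i = j), funext fun x => ?_⟩
    have hsum : (∑ i, if (decide (i = j) && x i) then 1 else 0 : ℕ) = if x j then 1 else 0 :=
      (Fintype.sum_eq_single j fun i hi => by simp [hi]).trans (by simp)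
    simp only [chi, hsum, extend0, dif_pos hm, j]
  · simp only [extend0, dif_neg hm, Bool.false_eq_true, if_false, pow_zero]
    exact one_mem _

theorem neg_one_pow_sx_mem_boolCharacters {t : ℕ} (k : Fin (t + 1) → Fin (n + 1)) :
    (fun x => (-1 : ℝ) ^ sx x k) ∈ boolCharacters n := by
  have hprod : (fun x => (-1 : ℝ) ^ sx x k) =
      ∏ i, fun x => (-1 : ℝ) ^ (if extend0 x (k i) then 1 else 0) := by
    ext x
    rw [Finset.prod_apply, sx, Finset.prod_pow_eq_pow_sum]
  rw [hprod]
  exact prod_mem fun i _ => neg_one_pow_extend0_mem_boolCharacters _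

end BooleanFourier

section Expansion

variable {𝕜 E : Type*} [RCLike 𝕜] [NormedAddCommGroup E] [InnerProductSpace 𝕜 E]
  {K : Type*} [Fintype K]

theorem norm_sum_ofReal_smul_sq (c : K → ℝ) (v : K → E) :
    ‖∑ k, (c k : 𝕜) • v k‖ ^ 2 = ∑ k, ∑ l, c k * c l * RCLike.re (inner 𝕜 (v k) (v l)) := by
  rw [← inner_self_eq_norm_sq (𝕜 := 𝕜), sum_inner, map_sum]
  refine Finset.sum_congr rfl fun k _ => ?_
  rw [inner_sum, map_sum]
  refine Finset.sum_congr rfl fun l _ => ?_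
  rw [inner_smul_left, inner_smul_right, RCLike.conj_ofReal, ← mul_assoc, ← RCLike.ofReal_mul,
    RCLike.re_ofReal_mul]

theorem sq_sum_le_card_mul_sum_sq_of_support_subset {K : Type*} [Fintype K] {f : K → ℝ}
    {s : Finset K} (hf : ∀ k ∉ s, f k = 0) : (∑ k, f k) ^ 2 ≤ s.card * ∑ k, f k ^ 2 := by
  rw [← Finset.sum_subset (Finset.subset_univ s) fun k _ hk => hf k hk]
  exact sq_sum_le_card_mul_sum_sq.trans (mul_le_mul_of_nonneg_left
    (Finset.sum_le_sum_of_subset_of_nonneg (Finset.subset_univ s) fun _ _ _ => sq_nonneg _)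
    (Nat.cast_nonneg _))

theorem fourierL1_norm_sum_smul_sq_le {n : ℕ} (ε : K → (Fin n → Bool) → ℝ)
    (hε : ∀ k, ε k ∈ boolCharacters n) (v : K → E) :
    fourierL1 (fun x => ‖∑ k, (ε k x : 𝕜) • v k‖ ^ 2) ≤ (∑ k, ‖v k‖) ^ 2 := by
  simp only [norm_sum_ofReal_smul_sq]
  calc _ ≤ ∑ k, ∑ l, fourierL1 (fun x => ε k x * ε l x * RCLike.re (inner 𝕜 (v k) (v l))) :=
        (fourierL1_sum_le _ _).trans (Finset.sum_le_sum fun k _ => fourierL1_sum_le _ _)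
    _ = ∑ k, ∑ l, |RCLike.re (inner 𝕜 (v k) (v l))| := by
        refine Finset.sum_congr rfl fun k _ => Finset.sum_congr rfl fun l _ => ?_
        have hchar : fourierL1 (fun x => ε k x * ε l x) = 1 :=
          fourierL1_of_mem_boolCharacters (mul_mem (hε k) (hε l))
        rw [fourierL1_mul_const, hchar, one_mul]
    _ ≤ ∑ k, ∑ l, ‖v k‖ * ‖v l‖ := by
        gcongr with k _ l _
        exact (RCLike.abs_re_le_norm _).trans (norm_inner_le_norm _ _)
    _ = (∑ k, ‖v k‖) ^ 2 := by rw [sq, Finset.sum_mul_sum]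

end Expansion

section Circuit

variable {H : Type*} [NormedAddCommGroup H] [InnerProductSpace ℂ H] [FiniteDimensional ℂ H]

theorem Utilde_mem_unitary {t : ℕ} {U : ℕ → H →L[ℂ] H}
    (hU : ∀ j ≤ t, U j ∈ unitary (H →L[ℂ] H)) : ∀ j ≤ t, Utilde U j ∈ unitary (H →L[ℂ] H)
  | 0, h => hU 0 h
  | j + 1, h => mul_mem (hU (j + 1) h) (Utilde_mem_unitary hU j (by omega))

theorem sum_norm_Ptilde_apply_sq {n j : ℕ} {U P : ℕ → H →L[ℂ] H}
    (hP : ∀ i ≤ n, IsStarProjection (P i)) (hP_sum : ∑ i ∈ Finset.range (n + 1), P i = 1)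
    (hU : Utilde U j ∈ unitary (H →L[ℂ] H)) (v : H) :
    ∑ i ∈ Finset.range (n + 1), ‖Ptilde U P i j v‖ ^ 2 = ‖v‖ ^ 2 := by
  have hnorm (i : ℕ) : ‖Ptilde U P i j v‖ = ‖P i (Utilde U j v)‖ :=
    norm_map_of_mem_unitary (Unitary.star_mem hU) _
  simp only [hnorm]
  rw [sum_norm_apply_sq_of_sum_eq_one (fun i hi => hP i (Finset.mem_range_succ_iff.mp hi))
    hP_sum, norm_map_of_mem_unitary hU]

theorem PsiVec_congr (U P : ℕ → H →L[ℂ] H) (Ψ : H) {k k' : ℕ → ℕ} :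
    ∀ s, (∀ i ≤ s, k i = k' i) → PsiVec U P Ψ k s = PsiVec U P Ψ k' s
  | 0, h => by simp only [PsiVec, h 0 le_rfl]
  | s + 1, h => by
    simp only [PsiVec, h (s + 1) le_rfl, PsiVec_congr U P Ψ s fun i hi => h i (by omega)]

/-- `Ψ(k)` for `k ∈ {0,…,n}^{s+1}`. -/
def psi (U P : ℕ → H →L[ℂ] H) (Ψ : H) {n s : ℕ} (k : Fin (s + 1) → Fin (n + 1)) : H :=
  PsiVec U P Ψ (fun i => (k (Fin.ofNat (s + 1) i) : ℕ)) s

theorem psi_snoc (U P : ℕ → H →L[ℂ] H) (Ψ : H) {n s : ℕ} (g : Fin (s + 1) → Fin (n + 1))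
    (a : Fin (n + 1)) :
    psi U P Ψ (Fin.snoc g a : Fin (s + 2) → Fin (n + 1)) =
      Ptilde U P a (s + 1) (psi U P Ψ g) := by
  have hlast : Fin.ofNat (s + 2) (s + 1) = Fin.last (s + 1) := by ext; simp
  have hinit (i : ℕ) (hi : i ≤ s) : Fin.ofNat (s + 2) i = (Fin.ofNat (s + 1) i).castSucc := by
    ext; simp [Nat.mod_eq_of_lt, show i < s + 1 by omega, show i < s + 2 by omega]
  simp only [psi, PsiVec, hlast, Fin.snoc_last]
  congr 1
  refine PsiVec_congr U P Ψ s fun i hi => ?_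
  rw [hinit i hi, Fin.snoc_castSucc]

theorem sum_norm_psi_sq {n t : ℕ} {U P : ℕ → H →L[ℂ] H} (Ψ : H)
    (hP : ∀ j ≤ t, ∀ v, ∑ i ∈ Finset.range (n + 1), ‖Ptilde U P i j v‖ ^ 2 = ‖v‖ ^ 2) :
    ∀ s ≤ t, ∑ k : Fin (s + 1) → Fin (n + 1), ‖psi U P Ψ k‖ ^ 2 = ‖Ψ‖ ^ 2
  | 0, h => by
    rw [← hP 0 h Ψ, ← Fin.sum_univ_eq_sum_range (fun i => ‖Ptilde U P i 0 Ψ‖ ^ 2),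
      ← (Equiv.funUnique (Fin 1) (Fin (n + 1))).symm.sum_comp]
    rfl
  | s + 1, h => by
    rw [← (Fin.snocEquiv fun _ => Fin (n + 1)).sum_comp, Fintype.sum_prod_type, Finset.sum_comm,
      ← sum_norm_psi_sq Ψ hP s (by omega)]
    refine Finset.sum_congr rfl fun g _ => ?_
    change ∑ a, ‖psi U P Ψ (Fin.snoc g a : Fin (s + 2) → Fin (n + 1))‖ ^ 2 = _
    simp only [psi_snoc]
    rw [← hP (s + 1) h,
      Fin.sum_univ_eq_sum_range (fun i => ‖Ptilde U P i (s + 1) (psi U P Ψ g)‖ ^ 2)]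

end Circuit

theorem fourierL1_le_card_nonzero_general {H : Type*} [NormedAddCommGroup H]
    [InnerProductSpace ℂ H] [FiniteDimensional ℂ H] (n t : ℕ) (P U : ℕ → H →L[ℂ] H)
    (hP_selfadj : ∀ i ≤ n, IsSelfAdjoint (P i))
    (hP_idem : ∀ i ≤ n, P i ∘L P i = P i)
    (hP_sum : ∑ i ∈ Finset.range (n + 1), P i = 1)
    (hU_unitary : ∀ j ≤ t,
      ContinuousLinearMap.adjoint (U j) ∘L U j = 1 ∧
        U j ∘L ContinuousLinearMap.adjoint (U j) = 1)
    (Ψ : H) (hΨ : ‖Ψ‖ = 1)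
    (Q : H →L[ℂ] H) (hQ_selfadj : IsSelfAdjoint Q) (hQ_idem : Q ∘L Q = Q) :
    fourierL1 (fun x : Fin n → Bool =>
        ‖Q (∑ k : Fin (t + 1) → Fin (n + 1),
            ((-1 : ℂ) ^ sx x k) • PsiVec U P Ψ (fun i => (k (Fin.ofNat (t + 1) i) : ℕ)) t)‖ ^ 2) ≤
      (Nat.card {k : Fin (t + 1) → Fin (n + 1) //
          PsiVec U P Ψ (fun i => (k (Fin.ofNat (t + 1) i) : ℕ)) t ≠ 0} : ℝ) := by
  classical
  have hPsi : ∑ k : Fin (t + 1) → Fin (n + 1), ‖psi U P Ψ k‖ ^ 2 = 1 := by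
    rw [sum_norm_psi_sq Ψ (fun j hj => sum_norm_Ptilde_apply_sq
      (fun i hi => ⟨hP_idem i hi, hP_selfadj i hi⟩) hP_sum (Utilde_mem_unitary hU_unitary j hj))
      t le_rfl, hΨ, one_pow]
  have hQPsi : ∑ k : Fin (t + 1) → Fin (n + 1), ‖Q (psi U P Ψ k)‖ ^ 2 ≤ 1 :=
    hPsi ▸ Finset.sum_le_sum fun k _ =>
      pow_le_pow_left₀ (norm_nonneg _) (IsStarProjection.norm_apply_le ⟨hQ_idem, hQ_selfadj⟩ _) 2
  have hπ (x : Fin n → Bool) :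
      ‖Q (∑ k : Fin (t + 1) → Fin (n + 1),
          ((-1 : ℂ) ^ sx x k) • PsiVec U P Ψ (fun i => (k (Fin.ofNat (t + 1) i) : ℕ)) t)‖ ^ 2 =
        ‖∑ k : Fin (t + 1) → Fin (n + 1), (((-1 : ℝ) ^ sx x k : ℝ) : ℂ) • Q (psi U P Ψ k)‖ ^ 2 := by
    simp only [map_sum, map_smul, Complex.ofReal_pow, Complex.ofReal_neg, Complex.ofReal_one, psi]
  simp only [hπ, Nat.card_eq_fintype_card, Fintype.card_subtype]
  calc _ ≤ (∑ k, ‖Q (psi U P Ψ k)‖) ^ 2 :=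
        fourierL1_norm_sum_smul_sq_le _ neg_one_pow_sx_mem_boolCharacters _
    _ ≤ _ * ∑ k, ‖Q (psi U P Ψ k)‖ ^ 2 :=
        sq_sum_le_card_mul_sum_sq_of_support_subset fun k hk => by
          simp only [Finset.mem_filter, Finset.mem_univ, true_and, not_not] at hk
          simp only [psi, hk, map_zero, norm_zero]
    _ ≤ _ := mul_le_of_le_one_right (Nat.cast_nonneg _) hQPsi

/-- For a CSOP `P̄_0, …, P̄_n`, unitaries `U_0, …, U_t`, a unit vector
`Ψ ∈ H` and an orthogonal projection `Q`, the output probability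
`π(x) = ‖Q Σ_k (−1)^{s_x(k)} Ψ(k)‖²` satisfies `L(π) ≤ d`, where
`d = #{k ∈ {0,…,n}^{t+1} : Ψ(k) ≠ 0}`. -/
theorem fourierL1_le_card_nonzero {H : Type*} [NormedAddCommGroup H]
    [InnerProductSpace ℂ H] [FiniteDimensional ℂ H] (n t : ℕ) (P U : ℕ → H →L[ℂ] H)
    (hP_selfadj : ∀ i ≤ n, IsSelfAdjoint (P i))
    (hP_idem : ∀ i ≤ n, P i ∘L P i = P i)
    (hP_orth : ∀ i ≤ n, ∀ j ≤ n, i ≠ j → P i ∘L P j = 0)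
    (hP_sum : ∑ i ∈ Finset.range (n + 1), P i = 1)
    (hU_unitary : ∀ j ≤ t,
      ContinuousLinearMap.adjoint (U j) ∘L U j = 1 ∧
        U j ∘L ContinuousLinearMap.adjoint (U j) = 1)
    (Ψ : H) (hΨ : ‖Ψ‖ = 1)
    (Q : H →L[ℂ] H) (hQ_selfadj : IsSelfAdjoint Q) (hQ_idem : Q ∘L Q = Q) :
    fourierL1 (fun x : Fin n → Bool =>
        ‖Q (∑ k : Fin (t + 1) → Fin (n + 1),
            ((-1 : ℂ) ^ sx x k) • PsiVec U P Ψ (fun i => (k (Fin.ofNat (t + 1) i) : ℕ)) t)‖ ^ 2) ≤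
      (Nat.card {k : Fin (t + 1) → Fin (n + 1) //
          PsiVec U P Ψ (fun i => (k (Fin.ofNat (t + 1) i) : ℕ)) t ≠ 0} : ℝ) :=
  fourierL1_le_card_nonzero_general n t P U hP_selfadj hP_idem hP_sum hU_unitary Ψ hΨ Q hQ_selfadj
    hQ_idem
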